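/- (Theorem: Regime 1 efficient convergence) Under the gradient flow dθ_i/dt = π_i(θ)(p_i − A(θ)) with π = softmax(θ), suppose p has a unique maximizer i* and the initial accuracy satisfies A(θ(0)) > p_i for all i ≠ i*. Set C = (p_{i*} − max_{i≠i*} p_i) · π_{i*}(θ(0))^2 > 0. Then for every ε > 0 and every t > (1/C)(1/ε − 1/(1 − π_{i*}(θ(0)))), we have 1 − π_{i*}(θ(t)) < ε. -/

import Mathlib

set_option maxHeartbeats 1000000

open Finset

noncomputable def softmax {n : ℕ} (θ : Fin n → ℝ) (i : Fin n) : ℝ :=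
  Real.exp (θ i) / ∑ k, Real.exp (θ k)

lemma sum_exp_pos {n : ℕ} (θ : Fin n → ℝ) (i : Fin n) : 0 < ∑ k, Real.exp (θ k) :=
  Finset.sum_pos (fun _ _ => Real.exp_pos _) ⟨i, Finset.mem_univ i⟩

lemma softmax_pos {n : ℕ} (θ : Fin n → ℝ) (i : Fin n) : 0 < softmax θ i :=
  div_pos (Real.exp_pos _) (sum_exp_pos θ i)

lemma softmax_sum {n : ℕ} (θ : Fin n → ℝ) (i : Fin n) : ∑ k, softmax θ k = 1 := by
  unfold softmax
  rw [← Finset.sum_div, div_self (sum_exp_pos θ i).ne']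

lemma softmax_lt_one {n : ℕ} (θ : Fin n → ℝ) (i j : Fin n) (hij : j ≠ i) :
    softmax θ i < 1 := by
  have hS := sum_exp_pos θ i
  unfold softmax
  rw [div_lt_one hS]
  have : ∑ k ∈ {i, j}, Real.exp (θ k) ≤ ∑ k, Real.exp (θ k) :=
    Finset.sum_le_sum_of_subset_of_nonneg (Finset.subset_univ _)
      (fun k _ _ => (Real.exp_pos _).le)
  rw [Finset.sum_pair (Ne.symm hij)] at this
  nlinarith [Real.exp_pos (θ j)]

lemma softmax_hasDerivAt {n : ℕ} (θ : ℝ → Fin n → ℝ) (d : Fin n → ℝ) (t : ℝ)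
    (hd : ∀ i, HasDerivAt (fun s => θ s i) (d i) t) (i : Fin n) :
    HasDerivAt (fun s => softmax (θ s) i)
      (softmax (θ t) i * (d i - ∑ k, softmax (θ t) k * d k)) t := by
  have hS : 0 < ∑ k, Real.exp (θ t k) := sum_exp_pos (θ t) i
  have h1 : HasDerivAt (fun s => Real.exp (θ s i)) (Real.exp (θ t i) * d i) t :=
    (hd i).exp
  have h2 : HasDerivAt (fun s => ∑ k, Real.exp (θ s k))
      (∑ k, Real.exp (θ t k) * d k) t :=
    HasDerivAt.fun_sum (fun k _ => (hd k).exp)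
  have h3 := h1.div h2 hS.ne'
  refine h3.congr_deriv ?_
  unfold softmax
  have hrw : ∑ k, (Real.exp (θ t k) / ∑ l, Real.exp (θ t l)) * d k
      = (∑ k, Real.exp (θ t k) * d k) / ∑ l, Real.exp (θ t l) := by
    rw [Finset.sum_div]
    exact Finset.sum_congr rfl fun k _ => div_mul_eq_mul_div _ _ _
  rw [hrw]
  field_simp

/-- algebraic identity for the derivative of the accuracy `A`. -/
lemma ident1 {n : ℕ} (f p : Fin n → ℝ) (A : ℝ) (hA : A = ∑ l, f l * p l) :
    ∑ j, (f j * (f j * (p j - A) - ∑ k, f k * (f k * (p k - A)))) * p j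
      = ∑ j, (f j)^2 * (p j - A)^2 := by
  have h1 : ∑ j, (f j * (f j * (p j - A) - ∑ k, f k * (f k * (p k - A)))) * p j
      = (∑ j, f j * (f j * (p j - A)) * p j)
        - (∑ j, f j * p j) * (∑ k, f k * (f k * (p k - A))) := by
    rw [Finset.sum_mul, ← Finset.sum_sub_distrib]
    exact Finset.sum_congr rfl fun j _ => by ring
  have h2 : ∑ j, (f j)^2 * (p j - A)^2
      = (∑ j, f j * (f j * (p j - A)) * p j)
        - A * (∑ k, f k * (f k * (p k - A))) := by
    rw [Finset.mul_sum, ← Finset.sum_sub_distrib]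
    exact Finset.sum_congr rfl fun j _ => by ring
  rw [h1, h2, ← hA]

/-- lower bounds for the derivative of `π istar`. -/
lemma ident2 {n : ℕ} (f p : Fin n → ℝ) (A M : ℝ) (istar : Fin n)
    (hsum : ∑ k, f k = 1) (hfpos : ∀ k, 0 < f k)
    (hAub : A ≤ p istar) (hAlb : ∀ j, j ≠ istar → p j ≤ A)
    (hA : A = ∑ l, f l * p l) (hM : ∀ j, j ≠ istar → p j ≤ M) :
    0 ≤ f istar * (f istar * (p istar - A) - ∑ k, f k * (f k * (p k - A))) ∧
    (p istar - M) * (f istar)^2 * (1 - f istar)^2 ≤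
      f istar * (f istar * (p istar - A) - ∑ k, f k * (f k * (p k - A))) := by
  have hsplit : ∑ k, f k * (f k * (p k - A))
      = (∑ k ∈ Finset.univ.erase istar, f k * (f k * (p k - A)))
        + f istar * (f istar * (p istar - A)) :=
    (Finset.sum_erase_add Finset.univ _ (Finset.mem_univ istar)).symm
  have he : ∑ k ∈ Finset.univ.erase istar, f k = 1 - f istar := by
    have := Finset.sum_erase_add Finset.univ f (Finset.mem_univ istar)
    rw [hsum] at this
    linarith
  have hT : ∑ k ∈ Finset.univ.erase istar, f k * (f k * (p k - A)) ≤ 0 := by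
    apply Finset.sum_nonpos
    intro k hk
    have hk' := (Finset.mem_erase.mp hk).1
    have h1 : p k - A ≤ 0 := by linarith [hAlb k hk']
    have h2 := (hfpos k).le
    nlinarith [mul_nonneg h2 h2]
  have hf1 : f istar ≤ 1 := by
    have : f istar ≤ ∑ k, f k :=
      Finset.single_le_sum (fun k _ => (hfpos k).le) (Finset.mem_univ istar)
    linarith
  have hA2 : A ≤ f istar * p istar + (1 - f istar) * M := by
    have hsplitA : A = (∑ k ∈ Finset.univ.erase istar, f k * p k)
        + f istar * p istar := by
      rw [hA]
      exact (Finset.sum_erase_add Finset.univ _ (Finset.mem_univ istar)).symm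
    have hb : ∑ k ∈ Finset.univ.erase istar, f k * p k
        ≤ ∑ k ∈ Finset.univ.erase istar, f k * M := by
      apply Finset.sum_le_sum
      intro k hk
      exact mul_le_mul_of_nonneg_left (hM k (Finset.mem_erase.mp hk).1) (hfpos k).le
    rw [← Finset.sum_mul, he] at hb
    linarith
  have hPA : 0 ≤ p istar - A := by linarith
  have hfp := hfpos istar
  constructor
  · rw [hsplit]
    have hinner : 0 ≤ f istar * (p istar - A)
        - ((∑ k ∈ Finset.univ.erase istar, f k * (f k * (p k - A)))
          + f istar * (f istar * (p istar - A))) := by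
      have h0 : 0 ≤ f istar * ((1 - f istar) * (p istar - A)) :=
        mul_nonneg hfp.le (mul_nonneg (by linarith) hPA)
      nlinarith [hT, h0]
    exact mul_nonneg hfp.le hinner
  · rw [hsplit]
    have h5 : (1 - f istar) * (p istar - M) ≤ p istar - A := by nlinarith [hA2]
    have h6 : f istar * (1 - f istar) * ((1 - f istar) * (p istar - M))
        ≤ f istar * (1 - f istar) * (p istar - A) :=
      mul_le_mul_of_nonneg_left h5 (mul_nonneg hfp.le (by linarith))
    have h7 : f istar * (1 - f istar) * ((1 - f istar) * (p istar - M))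
        ≤ f istar * (p istar - A)
          - ((∑ k ∈ Finset.univ.erase istar, f k * (f k * (p k - A)))
            + f istar * (f istar * (p istar - A))) := by nlinarith [h6, hT]
    have h8 := mul_le_mul_of_nonneg_left h7 hfp.le
    nlinarith [h8]

theorem regime1_efficient_convergence {n : ℕ}
    (p : Fin n → ℝ) (hp : ∀ i, p i ∈ Set.Icc (0 : ℝ) 1)
    (istar : Fin n) (hmax : ∀ i, i ≠ istar → p i < p istar)
    (hne : (Finset.univ.erase istar).Nonempty)
    (θ : ℝ → Fin n → ℝ)
    (hflow : ∀ t, 0 ≤ t → ∀ i, HasDerivAt (fun s => θ s i)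
      (softmax (θ t) i * (p i - ∑ j, softmax (θ t) j * p j)) t)
    (hinit : ∀ i, i ≠ istar → p i < ∑ j, softmax (θ 0) j * p j)
    (hpos : 0 < softmax (θ 0) istar)
    (C : ℝ)
    (hC : C = (p istar - (Finset.univ.erase istar).sup' hne p) *
      (softmax (θ 0) istar) ^ 2) :
    0 < C ∧
    ∀ ε : ℝ, 0 < ε → ∀ t, 0 ≤ t →
      t > (1 / C) * (1 / ε - 1 / (1 - softmax (θ 0) istar)) →
        1 - softmax (θ t) istar < ε := by
  obtain ⟨j0, hj0mem, hj0⟩ := Finset.exists_mem_eq_sup' hne p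
  have hj0ne : j0 ≠ istar := (Finset.mem_erase.mp hj0mem).1
  have hPM : 0 < p istar - (Finset.univ.erase istar).sup' hne p := by
    rw [hj0]; linarith [hmax j0 hj0ne]
  have hCpos : 0 < C := by
    rw [hC]; exact mul_pos hPM (pow_pos hpos 2)
  -- softmax derivative along the flow
  have hπd : ∀ t, 0 ≤ t → ∀ i, HasDerivAt (fun s => softmax (θ s) i)
      (softmax (θ t) i * (softmax (θ t) i * (p i - ∑ l, softmax (θ t) l * p l)
        - ∑ k, softmax (θ t) k * (softmax (θ t) k * (p k - ∑ l, softmax (θ t) l * p l)))) t :=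
    fun t ht i => softmax_hasDerivAt θ
      (fun i => softmax (θ t) i * (p i - ∑ l, softmax (θ t) l * p l)) t (hflow t ht) i
  -- derivative of A
  have hAd : ∀ t, 0 ≤ t → HasDerivAt (fun s => ∑ j, softmax (θ s) j * p j)
      (∑ j, (softmax (θ t) j)^2 * (p j - ∑ l, softmax (θ t) l * p l)^2) t := by
    intro t ht
    have h := HasDerivAt.fun_sum
      (fun j (_ : j ∈ Finset.univ) => (hπd t ht j).mul_const (p j))
    rwa [ident1 (softmax (θ t)) p _ rfl] at h
  -- A is monotone on [0, ∞)
  have hAmono : MonotoneOn (fun s => ∑ j, softmax (θ s) j * p j) (Set.Ici 0) := by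
    apply monotoneOn_of_deriv_nonneg (convex_Ici 0)
    · exact fun t ht => (hAd t ht).continuousAt.continuousWithinAt
    · rw [interior_Ici]
      exact fun t ht => (hAd t (le_of_lt ht)).differentiableAt.differentiableWithinAt
    · rw [interior_Ici]
      intro t ht
      rw [(hAd t (le_of_lt ht)).deriv]
      exact Finset.sum_nonneg fun j _ => mul_nonneg (sq_nonneg _) (sq_nonneg _)
  -- bounds on A
  have hAub : ∀ t, ∑ j, softmax (θ t) j * p j ≤ p istar := by
    intro t
    calc ∑ j, softmax (θ t) j * p j ≤ ∑ j, softmax (θ t) j * p istar := by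
          apply Finset.sum_le_sum
          intro j _
          apply mul_le_mul_of_nonneg_left _ (softmax_pos (θ t) j).le
          rcases eq_or_ne j istar with h | h
          · rw [h]
          · exact (hmax j h).le
      _ = p istar := by rw [← Finset.sum_mul, softmax_sum (θ t) istar, one_mul]
  have hAlb : ∀ t, 0 ≤ t → ∀ j, j ≠ istar → p j ≤ ∑ l, softmax (θ t) l * p l := by
    intro t ht j hj
    exact le_trans (hinit j hj).le (hAmono Set.self_mem_Ici ht ht)
  have hπlt1 : ∀ t, softmax (θ t) istar < 1 :=
    fun t => softmax_lt_one (θ t) istar j0 hj0ne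
  -- key bound on the derivative of π istar
  have hkey : ∀ t, 0 ≤ t →
      0 ≤ softmax (θ t) istar * (softmax (θ t) istar * (p istar - ∑ l, softmax (θ t) l * p l)
        - ∑ k, softmax (θ t) k * (softmax (θ t) k * (p k - ∑ l, softmax (θ t) l * p l))) ∧
      (p istar - (Finset.univ.erase istar).sup' hne p) * (softmax (θ t) istar)^2
          * (1 - softmax (θ t) istar)^2 ≤
        softmax (θ t) istar * (softmax (θ t) istar * (p istar - ∑ l, softmax (θ t) l * p l)
          - ∑ k, softmax (θ t) k * (softmax (θ t) k * (p k - ∑ l, softmax (θ t) l * p l))) := by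
    intro t ht
    exact ident2 (softmax (θ t)) p _ _ istar (softmax_sum (θ t) istar)
      (softmax_pos (θ t)) (hAub t) (hAlb t ht) rfl
      (fun j hj => Finset.le_sup' p (Finset.mem_erase.mpr ⟨hj, Finset.mem_univ j⟩))
  -- π istar is monotone on [0, ∞)
  have hπmono : MonotoneOn (fun s => softmax (θ s) istar) (Set.Ici 0) := by
    apply monotoneOn_of_deriv_nonneg (convex_Ici 0)
    · exact fun t ht => (hπd t ht istar).continuousAt.continuousWithinAt
    · rw [interior_Ici]
      exact fun t ht => (hπd t (le_of_lt ht) istar).differentiableAt.differentiableWithinAt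
    · rw [interior_Ici]
      intro t ht
      rw [(hπd t (le_of_lt ht) istar).deriv]
      exact (hkey t (le_of_lt ht)).1
  refine ⟨hCpos, ?_⟩
  intro ε hε t ht htgt
  have hu : ∀ s, 0 < 1 - softmax (θ s) istar := fun s => by linarith [hπlt1 s]
  -- the comparison function g
  have hgd : ∀ s, 0 ≤ s → HasDerivAt
      (fun r => (1 - softmax (θ r) istar)⁻¹ - C * r)
      ((softmax (θ s) istar * (softmax (θ s) istar * (p istar - ∑ l, softmax (θ s) l * p l)
        - ∑ k, softmax (θ s) k * (softmax (θ s) k * (p k - ∑ l, softmax (θ s) l * p l))))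
        / (1 - softmax (θ s) istar)^2 - C) s := by
    intro s hs
    have h1 : HasDerivAt (fun r => 1 - softmax (θ r) istar)
        (-(softmax (θ s) istar * (softmax (θ s) istar * (p istar - ∑ l, softmax (θ s) l * p l)
          - ∑ k, softmax (θ s) k * (softmax (θ s) k * (p k - ∑ l, softmax (θ s) l * p l))))) s := by
      simpa using (hasDerivAt_const s (1:ℝ)).fun_sub (hπd s hs istar)
    have h2 := h1.inv (hu s).ne'
    have h3 := h2.fun_sub ((hasDerivAt_id s).const_mul C)
    refine h3.congr_deriv ?_
    have := (hu s).ne'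
    field_simp
  have hgmono : MonotoneOn (fun r => (1 - softmax (θ r) istar)⁻¹ - C * r) (Set.Ici 0) := by
    apply monotoneOn_of_deriv_nonneg (convex_Ici 0)
    · exact fun s hs => (hgd s hs).continuousAt.continuousWithinAt
    · rw [interior_Ici]
      exact fun s hs => (hgd s (le_of_lt hs)).differentiableAt.differentiableWithinAt
    · rw [interior_Ici]
      intro s hs
      rw [(hgd s (le_of_lt hs)).deriv]
      have hk := (hkey s (le_of_lt hs)).2
      have hm : softmax (θ 0) istar ≤ softmax (θ s) istar :=
        hπmono Set.self_mem_Ici (Set.mem_Ici.mpr (le_of_lt hs)) (le_of_lt hs)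
      have hC2 : C * (1 - softmax (θ s) istar)^2 ≤
          softmax (θ s) istar * (softmax (θ s) istar * (p istar - ∑ l, softmax (θ s) l * p l)
            - ∑ k, softmax (θ s) k * (softmax (θ s) k * (p k - ∑ l, softmax (θ s) l * p l))) := by
      -- C (1-π)² = (p*-M) π0² (1-π)² ≤ (p*-M) π² (1-π)² ≤ RHS
        refine le_trans ?_ hk
        rw [hC]
        have h7 : (softmax (θ 0) istar)^2 ≤ (softmax (θ s) istar)^2 :=
          pow_le_pow_left₀ hpos.le hm 2
        exact mul_le_mul_of_nonneg_right
          (mul_le_mul_of_nonneg_left h7 hPM.le) (sq_nonneg _)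
      have h9 := (le_div_iff₀ (pow_pos (hu s) 2)).mpr hC2
      linarith
  -- conclude
  have hge := hgmono Set.self_mem_Ici ht ht
  simp only [mul_zero, sub_zero] at hge
  have h2 : 1/ε - 1/(1 - softmax (θ 0) istar) < C * t := by
    have h := (mul_lt_mul_iff_right₀ hCpos).mpr htgt
    calc 1/ε - 1/(1 - softmax (θ 0) istar)
        = C * ((1/C) * (1/ε - 1/(1 - softmax (θ 0) istar))) := by
          rw [← mul_assoc, mul_one_div_cancel hCpos.ne', one_mul]
      _ < C * t := h
  have h3 : ε⁻¹ < (1 - softmax (θ t) istar)⁻¹ := by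
    rw [one_div, one_div] at h2
    linarith
  have := (inv_lt_inv₀ hε (hu t)).mp h3
  exact this
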